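/- (Convex SGD rate under WGC) If f is convex, L-smooth, minimized at w*, and its stochastic gradients are unbiased and satisfy E_z‖∇f(w,z)‖² ≤ 2ρL[f(w) − f(w*)], then SGD with constant step-size η = 1/(4ρL) satisfies, for the averaged iterate w̄_k = (1/k)Σ_{i=1}^k w_i starting from w₀: E[f(w̄_k)] − f(w*) ≤ 4(1+ρ)L‖w₀ − w*‖²/k, assuming additionally f(w₀) − f(w*) ≤ (L/2)‖w₀ − w*‖². -/

import Mathlib

/-!
One SGD step, averaged over the noise, contracts the squared distance to `w*`: unbiasedness and
convexity turn the cross term into `-2η (f w - f w*)`, and the weak growth condition makes the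
variance term `η² E‖∇f(w, z)‖²` at most `η/2 (f w - f w*)` for `η = 1/(4ρL)`. Hence
`E‖w_{i+1} - w*‖² ≤ E‖w_i - w*‖² - 3η/2 (E f(w_i) - f w*)`, and telescoping over `k + 1` steps
bounds `∑_{i ≤ k} (E f(w_i) - f w*)` by `8ρL/3 ‖w₀ - w*‖²`. Jensen's inequality passes this to
the averaged iterate. Since `w_i` only depends on the first `i` noise values, its expectation
over the first `i` or over the first `k ≥ i` noise values is the same.
-/

open scoped RealInnerProductSpace
open Finset

/-- Expectation over the first `k` steps of uniform i.i.d. noise in `Fin n`. -/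
noncomputable def ExpN (n k : ℕ) (hn : 0 < n) (h : (ℕ → Fin n) → ℝ) : ℝ :=
  (∑ σ : Fin k → Fin n, h (fun i => if hi : i < k then σ ⟨i, hi⟩ else ⟨0, hn⟩)) / (n : ℝ) ^ k

section InnerProductSpace

variable {E : Type*} [NormedAddCommGroup E] [InnerProductSpace ℝ E]

theorem ConvexOn.add_inner_le_of_hasGradientAt [CompleteSpace E] {s : Set E} {f : E → ℝ}
    {g x y : E} (hf : ConvexOn ℝ s f) (hx : x ∈ s) (hy : y ∈ s) (hg : HasGradientAt f g x) :
    f x + ⟪g, y - x⟫ ≤ f y := by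
  have hline : ConvexOn ℝ (Set.Icc (0 : ℝ) 1) (f ∘ AffineMap.lineMap x y) :=
    (hf.comp_affineMap _).subset (fun t ht => hf.1.lineMap_mem hx hy ht) (convex_Icc 0 1)
  have hderiv : HasDerivAt (f ∘ AffineMap.lineMap x y) ⟪g, y - x⟫ (0 : ℝ) := by
    have hg' :
        HasFDerivAt f (InnerProductSpace.toDual ℝ E g) (AffineMap.lineMap (k := ℝ) x y 0) := by
      simpa using hg.hasFDerivAt
    simpa using hg'.comp_hasDerivAt (0 : ℝ) AffineMap.hasDerivAt_lineMap
  have := hline.le_slope_of_hasDerivAt (by simp) (by simp) zero_lt_one hderiv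
  simp only [slope_def_field, Function.comp_apply, AffineMap.lineMap_apply_zero,
    AffineMap.lineMap_apply_one, sub_zero, div_one] at this
  linarith

theorem mean_norm_sub_smul_sq {n : ℕ} (hn : 0 < n) (u : E) (η : ℝ) (g : Fin n → E) :
    (1 / (n : ℝ)) * ∑ z, ‖u - η • g z‖ ^ 2
      = ‖u‖ ^ 2 - 2 * η * ⟪(1 / (n : ℝ)) • ∑ z, g z, u⟫
        + η ^ 2 * ((1 / (n : ℝ)) * ∑ z, ‖g z‖ ^ 2) := by
  simp only [norm_sub_sq_real, norm_smul, real_inner_smul_right, sum_add_distrib,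
    sum_sub_distrib, sum_const, card_univ, Fintype.card_fin, nsmul_eq_mul, ← mul_sum,
    real_inner_comm u, inner_sum, Real.norm_eq_abs, mul_pow, sq_abs]
  field_simp

theorem mean_dist_sq_sgd_step_le [CompleteSpace E] {n : ℕ} (hn : 0 < n) {s : Set E} {f : E → ℝ}
    {g : Fin n → E} {x y : E} {ρ L η : ℝ} (hf : ConvexOn ℝ s f) (hx : x ∈ s) (hy : y ∈ s)
    (hgrad : HasGradientAt f ((1 / (n : ℝ)) • ∑ z, g z) x)
    (hwgc : (1 / (n : ℝ)) * ∑ z, ‖g z‖ ^ 2 ≤ 2 * ρ * L * (f x - f y))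
    (hρL : 0 < ρ * L) (hη : η = 1 / (4 * ρ * L)) :
    (1 / (n : ℝ)) * ∑ z, ‖x - η • g z - y‖ ^ 2 ≤ ‖x - y‖ ^ 2 - 3 * η / 2 * (f x - f y) := by
  have hη0 : 0 ≤ η := by rw [hη, mul_assoc]; positivity
  have hηρL : η * (2 * ρ * L) = 1 / 2 := by
    rw [hη, div_mul_eq_mul_div, one_mul, div_eq_iff (by linarith : (0 : ℝ) < 4 * ρ * L).ne']
    ring
  have hgap : f x - f y ≤ ⟪(1 / (n : ℝ)) • ∑ z, g z, x - y⟫ := by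
    have := hf.add_inner_le_of_hasGradientAt hx hy hgrad
    rw [← neg_sub x y, inner_neg_right] at this
    linarith
  simp_rw [sub_right_comm x _ y]
  rw [mean_norm_sub_smul_sq hn]
  calc ‖x - y‖ ^ 2 - 2 * η * ⟪(1 / (n : ℝ)) • ∑ z, g z, x - y⟫
        + η ^ 2 * ((1 / (n : ℝ)) * ∑ z, ‖g z‖ ^ 2)
      ≤ ‖x - y‖ ^ 2 - 2 * η * (f x - f y) + η ^ 2 * (2 * ρ * L * (f x - f y)) := by
        gcongr
    _ = ‖x - y‖ ^ 2 - 3 * η / 2 * (f x - f y) := by linear_combination η * (f x - f y) * hηρL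

end InnerProductSpace

section Expectation

variable {n k : ℕ} (hn : 0 < n)

theorem ExpN_mono {h h' : (ℕ → Fin n) → ℝ} (hle : ∀ ω, h ω ≤ h' ω) :
    ExpN n k hn h ≤ ExpN n k hn h' :=
  div_le_div_of_nonneg_right (sum_le_sum fun _ _ => hle _) (by positivity)

theorem ExpN_nonneg {h : (ℕ → Fin n) → ℝ} (hh : ∀ ω, 0 ≤ h ω) : 0 ≤ ExpN n k hn h :=
  div_nonneg (sum_nonneg fun _ _ => hh _) (by positivity)

theorem ExpN_const (c : ℝ) : ExpN n k hn (fun _ => c) = c := by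
  have : (n : ℝ) ^ k ≠ 0 := by positivity
  simp [ExpN, field]

theorem ExpN_sub (h h' : (ℕ → Fin n) → ℝ) :
    ExpN n k hn (fun ω => h ω - h' ω) = ExpN n k hn h - ExpN n k hn h' := by
  simp only [ExpN, sum_sub_distrib, sub_div]

theorem ExpN_const_mul (c : ℝ) (h : (ℕ → Fin n) → ℝ) :
    ExpN n k hn (fun ω => c * h ω) = c * ExpN n k hn h := by
  simp only [ExpN, ← mul_sum, mul_div_assoc]

theorem ExpN_sum {ι : Type*} (s : Finset ι) (h : ι → (ℕ → Fin n) → ℝ) :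
    ExpN n k hn (fun ω => ∑ i ∈ s, h i ω) = ∑ i ∈ s, ExpN n k hn (h i) := by
  simp only [ExpN, sum_div]
  exact sum_comm

theorem ExpN_succ (h : (ℕ → Fin n) → ℝ) :
    ExpN n (k + 1) hn h
      = ExpN n k hn (fun ω => (1 / (n : ℝ)) * ∑ z, h (Function.update ω k z)) := by
  have hsplit (F : (Fin (k + 1) → Fin n) → ℝ) :
      ∑ σ, F σ = ∑ τ : Fin k → Fin n, ∑ z, F (Fin.snoc τ z) := by
    rw [← (Fin.snocEquiv fun _ => Fin n).sum_comp, Fintype.sum_prod_type, sum_comm]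
    rfl
  have hext (τ : Fin k → Fin n) (z : Fin n) :
      (fun i => if hi : i < k + 1 then (Fin.snoc τ z : Fin (k + 1) → Fin n) ⟨i, hi⟩ else ⟨0, hn⟩)
        = Function.update (fun i => if hi : i < k then τ ⟨i, hi⟩ else ⟨0, hn⟩) k z := by
    funext i
    rcases lt_trichotomy i k with hik | rfl | hki
    · simp [hik, Nat.lt_succ_of_lt hik, Fin.snoc, hik.ne]
    · simp [Fin.snoc]
    · simp [hki.ne', not_le.mpr hki, not_lt.mpr hki.le]
  have : (n : ℝ) ≠ 0 := by positivity
  simp only [ExpN, hsplit, hext, ← mul_sum, pow_succ]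
  field_simp

theorem ExpN_succ_of_dependsOn {h : (ℕ → Fin n) → ℝ} (hh : DependsOn h (Set.Iio k)) :
    ExpN n (k + 1) hn h = ExpN n k hn h := by
  have hupd (ω : ℕ → Fin n) (z : Fin n) : h (Function.update ω k z) = h ω :=
    hh fun i hi => Function.update_of_ne (ne_of_lt hi) _ _
  have : (n : ℝ) ≠ 0 := by positivity
  simp only [ExpN_succ, hupd, sum_const, card_univ, Fintype.card_fin, nsmul_eq_mul]
  field_simp

theorem ExpN_of_dependsOn {m : ℕ} (hmk : m ≤ k) {h : (ℕ → Fin n) → ℝ}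
    (hh : DependsOn h (Set.Iio m)) : ExpN n k hn h = ExpN n m hn h := by
  induction k, hmk using Nat.le_induction with
  | base => rfl
  | succ k hmk ih =>
    rw [ExpN_succ_of_dependsOn hn (hh.mono (Set.Iio_subset_Iio hmk)), ih]

end Expectation

theorem sum_range_mul_le_of_add_mul_le {a b : ℕ → ℝ} {c : ℝ} (ha : ∀ i, 0 ≤ a i)
    (hab : ∀ i, a (i + 1) + c * b i ≤ a i) (m : ℕ) : c * ∑ i ∈ range m, b i ≤ a 0 :=
  calc c * ∑ i ∈ range m, b i ≤ ∑ i ∈ range m, (a i - a (i + 1)) := by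
        rw [mul_sum]; exact sum_le_sum fun i _ => by linarith [hab i]
    _ = a 0 - a m := sum_range_sub' a m
    _ ≤ a 0 := by linarith [ha m]

section SGD

variable {E : Type*} [NormedAddCommGroup E] [InnerProductSpace ℝ E] {n : ℕ}
  {G : E → Fin n → E} {η : ℝ} {w0 : E} {W : (ℕ → Fin n) → ℕ → E}

theorem sgd_iterate_dependsOn (hW0 : ∀ ω, W ω 0 = w0)
    (hWs : ∀ ω k, W ω (k + 1) = W ω k - η • G (W ω k) (ω k)) (i : ℕ) :
    DependsOn (W · i) (Set.Iio i) := by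
  induction i with
  | zero => intro ω ω' _; simp only [hW0]
  | succ i ih =>
    intro ω ω' h
    simp only [hWs, ih fun j hj => h j (Nat.lt_succ_of_lt hj), h i (Nat.lt_succ_self i)]

theorem ExpN_dist_sq_sgd_succ_le [CompleteSpace E] (hn : 0 < n) {f : E → ℝ} {y : E} {ρ L : ℝ}
    (hW0 : ∀ ω, W ω 0 = w0) (hWs : ∀ ω k, W ω (k + 1) = W ω k - η • G (W ω k) (ω k))
    (hf : ConvexOn ℝ Set.univ f) (hgrad : ∀ v, HasGradientAt f ((1 / (n : ℝ)) • ∑ z, G v z) v)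
    (hwgc : ∀ v, (1 / (n : ℝ)) * ∑ z, ‖G v z‖ ^ 2 ≤ 2 * ρ * L * (f v - f y))
    (hρL : 0 < ρ * L) (hη : η = 1 / (4 * ρ * L)) (i : ℕ) :
    ExpN n (i + 1) hn (fun ω => ‖W ω (i + 1) - y‖ ^ 2)
      ≤ ExpN n i hn (fun ω => ‖W ω i - y‖ ^ 2)
        - 3 * η / 2 * (ExpN n i hn (fun ω => f (W ω i)) - f y) := by
  have hstep (ω : ℕ → Fin n) (z : Fin n) :
      W (Function.update ω i z) (i + 1) = W ω i - η • G (W ω i) z := by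
    have hprev : W (Function.update ω i z) i = W ω i :=
      sgd_iterate_dependsOn hW0 hWs i fun j hj => Function.update_of_ne (ne_of_lt hj) _ _
    rw [hWs, hprev, Function.update_self]
  calc ExpN n (i + 1) hn (fun ω => ‖W ω (i + 1) - y‖ ^ 2)
      = ExpN n i hn (fun ω => (1 / (n : ℝ)) * ∑ z, ‖W ω i - η • G (W ω i) z - y‖ ^ 2) := by
        simp only [ExpN_succ, hstep]
    _ ≤ ExpN n i hn (fun ω => ‖W ω i - y‖ ^ 2 - 3 * η / 2 * (f (W ω i) - f y)) :=
        ExpN_mono hn fun ω => mean_dist_sq_sgd_step_le hn hf (Set.mem_univ _) (Set.mem_univ _)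
          (hgrad _) (hwgc _) hρL hη
    _ = _ := by rw [ExpN_sub, ExpN_const_mul, ExpN_sub, ExpN_const]

theorem sgd_sum_range_ExpN_sub_le [CompleteSpace E] (hn : 0 < n) {f : E → ℝ} {y : E}
    {ρ L : ℝ} (hW0 : ∀ ω, W ω 0 = w0) (hWs : ∀ ω k, W ω (k + 1) = W ω k - η • G (W ω k) (ω k))
    (hf : ConvexOn ℝ Set.univ f) (hgrad : ∀ v, HasGradientAt f ((1 / (n : ℝ)) • ∑ z, G v z) v)
    (hwgc : ∀ v, (1 / (n : ℝ)) * ∑ z, ‖G v z‖ ^ 2 ≤ 2 * ρ * L * (f v - f y))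
    (hρL : 0 < ρ * L) (hη : η = 1 / (4 * ρ * L)) (m : ℕ) :
    3 * η / 2 * ∑ i ∈ range m, (ExpN n i hn (fun ω => f (W ω i)) - f y) ≤ ‖w0 - y‖ ^ 2 := by
  calc _ ≤ ExpN n 0 hn (fun ω => ‖W ω 0 - y‖ ^ 2) :=
        sum_range_mul_le_of_add_mul_le (a := fun i => ExpN n i hn (fun ω => ‖W ω i - y‖ ^ 2))
          (fun i => ExpN_nonneg hn fun ω => sq_nonneg _)
          (fun i => by linarith [ExpN_dist_sq_sgd_succ_le hn hW0 hWs hf hgrad hwgc hρL hη i]) m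
    _ = ‖w0 - y‖ ^ 2 := by simp only [hW0, ExpN_const]

theorem ExpN_sgd_average_sub_le (hn : 0 < n) {f : E → ℝ} (c : ℝ)
    (hW0 : ∀ ω, W ω 0 = w0) (hWs : ∀ ω k, W ω (k + 1) = W ω k - η • G (W ω k) (ω k))
    (hf : ConvexOn ℝ Set.univ f) {k : ℕ} (hk : 0 < k) :
    ExpN n k hn (fun ω => f ((1 / (k : ℝ)) • ∑ i ∈ Icc 1 k, W ω i)) - c
      ≤ 1 / (k : ℝ) * ∑ i ∈ Icc 1 k, (ExpN n i hn (fun ω => f (W ω i)) - c) := by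
  have hweights : ∑ _i ∈ Icc 1 k, 1 / (k : ℝ) = 1 := by
    have : (k : ℝ) ≠ 0 := by positivity
    simp [field]
  have hjensen (ω : ℕ → Fin n) :
      f ((1 / (k : ℝ)) • ∑ i ∈ Icc 1 k, W ω i) ≤ 1 / (k : ℝ) * ∑ i ∈ Icc 1 k, f (W ω i) := by
    rw [smul_sum, mul_sum]
    exact hf.map_sum_le (fun _ _ => by positivity) hweights fun _ _ => Set.mem_univ _
  have hhorizon :
      ∀ i ∈ Icc 1 k, ExpN n k hn (fun ω => f (W ω i)) = ExpN n i hn (fun ω => f (W ω i)) :=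
    fun i hi => ExpN_of_dependsOn hn (mem_Icc.1 hi).2
      fun ω ω' h => congrArg f (sgd_iterate_dependsOn hW0 hWs i h)
  calc ExpN n k hn (fun ω => f ((1 / (k : ℝ)) • ∑ i ∈ Icc 1 k, W ω i)) - c
      ≤ ExpN n k hn (fun ω => 1 / (k : ℝ) * ∑ i ∈ Icc 1 k, f (W ω i)) - c :=
        sub_le_sub_right (ExpN_mono hn hjensen) c
    _ = _ := by
        have : (k : ℝ) ≠ 0 := by positivity
        rw [ExpN_const_mul, ExpN_sum, sum_congr rfl hhorizon, sum_sub_distrib, sum_const,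
          Nat.card_Icc, Nat.add_sub_cancel, nsmul_eq_mul]
        field_simp

end SGD

theorem sgd_convex_rate_wgc_general
    (d n : ℕ) (hn : 0 < n)
    (f : EuclideanSpace ℝ (Fin d) → ℝ)
    (f' : EuclideanSpace ℝ (Fin d) → EuclideanSpace ℝ (Fin d))
    (G : EuclideanSpace ℝ (Fin d) → Fin n → EuclideanSpace ℝ (Fin d))
    (ρ L η : ℝ) (w0 wstar : EuclideanSpace ℝ (Fin d))
    (W : (ℕ → Fin n) → ℕ → EuclideanSpace ℝ (Fin d))
    (hL : 0 < L) (hρ : 1 ≤ ρ)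
    (hconv : ConvexOn ℝ Set.univ f)
    (hgrad : ∀ v, HasGradientAt f (f' v) v)
    (hmin : ∀ v, f wstar ≤ f v)
    (hunbiased : ∀ v, (1 / (n : ℝ)) • ∑ z, G v z = f' v)
    (hwgc : ∀ v, (1 / (n : ℝ)) * ∑ z, ‖G v z‖ ^ 2 ≤ 2 * ρ * L * (f v - f wstar))
    (hη : η = 1 / (4 * ρ * L))
    (hW0 : ∀ ω, W ω 0 = w0)
    (hWs : ∀ ω k, W ω (k + 1) = W ω k - η • G (W ω k) (ω k)) :
    ∀ k : ℕ, 0 < k →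
      ExpN n k hn (fun ω => f ((1 / (k : ℝ)) • ∑ i ∈ Finset.Icc 1 k, W ω i)) - f wstar
        ≤ 4 * (1 + ρ) * L * ‖w0 - wstar‖ ^ 2 / k := by
  intro k hk
  have hρL : 0 < ρ * L := mul_pos (by linarith) hL
  have hηρL : η * (4 * ρ * L) = 1 := by
    rw [hη, one_div_mul_cancel (by linarith : (0 : ℝ) < 4 * ρ * L).ne']
  set b : ℕ → ℝ := fun i => ExpN n i hn (fun ω => f (W ω i)) - f wstar
  have hb (i : ℕ) : 0 ≤ b i :=
    sub_nonneg.2 <| (ExpN_const hn (f wstar)).symm.le.trans (ExpN_mono hn fun ω => hmin (W ω i))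
  have hsum : 3 * η / 2 * ∑ i ∈ range (k + 1), b i ≤ ‖w0 - wstar‖ ^ 2 :=
    sgd_sum_range_ExpN_sub_le hn hW0 hWs hconv (fun v => hunbiased v ▸ hgrad v) hwgc hρL hη _
  have hIcc : ∑ i ∈ Icc 1 k, b i ≤ ∑ i ∈ range (k + 1), b i :=
    sum_le_sum_of_subset_of_nonneg
      (fun i hi => by simp only [mem_Icc, mem_range] at hi ⊢; omega) fun i _ _ => hb i
  have hbound : ∑ i ∈ Icc 1 k, b i ≤ 8 / 3 * ρ * L * ‖w0 - wstar‖ ^ 2 :=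
    calc ∑ i ∈ Icc 1 k, b i ≤ η * (4 * ρ * L) * ∑ i ∈ range (k + 1), b i := by rwa [hηρL, one_mul]
      _ = 8 / 3 * ρ * L * (3 * η / 2 * ∑ i ∈ range (k + 1), b i) := by ring
      _ ≤ 8 / 3 * ρ * L * ‖w0 - wstar‖ ^ 2 := by gcongr
  have hrate : 8 / 3 * ρ * L * ‖w0 - wstar‖ ^ 2 ≤ 4 * (1 + ρ) * L * ‖w0 - wstar‖ ^ 2 := by
    gcongr <;> linarith
  calc _ ≤ 1 / (k : ℝ) * ∑ i ∈ Icc 1 k, b i := ExpN_sgd_average_sub_le hn (f wstar) hW0 hWs hconv hk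
    _ ≤ 4 * (1 + ρ) * L * ‖w0 - wstar‖ ^ 2 / k := by
        rw [one_div_mul_eq_div]
        gcongr
        exact hbound.trans hrate

/-- Convex SGD rate under the weak growth condition: with
`η = 1/(4ρL)`, the averaged iterate satisfies
`E f(w̄_k) − f(w*) ≤ 4(1+ρ)L‖w₀ − w*‖²/k`. -/
theorem sgd_convex_rate_wgc
    (d n : ℕ) (hn : 0 < n)
    (f : EuclideanSpace ℝ (Fin d) → ℝ)
    (f' : EuclideanSpace ℝ (Fin d) → EuclideanSpace ℝ (Fin d))
    (G : EuclideanSpace ℝ (Fin d) → Fin n → EuclideanSpace ℝ (Fin d))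
    (ρ L η : ℝ) (w0 wstar : EuclideanSpace ℝ (Fin d))
    (W : (ℕ → Fin n) → ℕ → EuclideanSpace ℝ (Fin d))
    (hL : 0 < L) (hρ : 1 ≤ ρ)
    (hconv : ConvexOn ℝ Set.univ f)
    (hgrad : ∀ v, HasGradientAt f (f' v) v)
    (hlip : LipschitzWith (Real.toNNReal L) f')
    (hmin : ∀ v, f wstar ≤ f v)
    (hunbiased : ∀ v, (1 / (n : ℝ)) • ∑ z, G v z = f' v)
    (hwgc : ∀ v, (1 / (n : ℝ)) * ∑ z, ‖G v z‖ ^ 2 ≤ 2 * ρ * L * (f v - f wstar))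
    (hη : η = 1 / (4 * ρ * L))
    (hinit : f w0 - f wstar ≤ (L / 2) * ‖w0 - wstar‖ ^ 2)
    (hW0 : ∀ ω, W ω 0 = w0)
    (hWs : ∀ ω k, W ω (k + 1) = W ω k - η • G (W ω k) (ω k)) :
    ∀ k : ℕ, 0 < k →
      ExpN n k hn (fun ω => f ((1 / (k : ℝ)) • ∑ i ∈ Finset.Icc 1 k, W ω i)) - f wstar
        ≤ 4 * (1 + ρ) * L * ‖w0 - wstar‖ ^ 2 / k :=
  sgd_convex_rate_wgc_general d n hn f f' G ρ L η w0 wstar W hL hρ hconv hgrad hmin hunbiased hwgc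
    hη hW0 hWs
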